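/- Let K be an algebraically closed field and let s, r ∈ K with s ≠ 0, r ≠ 0, s² ≠ 1, r² ≠ 1; set t = diag(s, s⁻¹), t' = diag(r, r⁻¹), Δ = s − s⁻¹. Then the set {(X, Y) : X is SL₂(K)-conjugate to t, Y is SL₂(K)-conjugate to t', and trace(X·Y) = s⁻¹·r + s·r⁻¹} is the union of the SL₂(K)-orbits of the three pairs ([[s⁻¹, Δ],[0, s]], t'), ([[s⁻¹, 0],[Δ, s]], t') and (diag(s⁻¹, s), t'), and these three orbits are pairwise disjoint. -/

import Mathlib

open Matrix

/-- `diag(s, s⁻¹) ∈ SL₂(K)` for `s ≠ 0`. -/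
def diagSL {K : Type*} [Field K] (s : K) (hs : s ≠ 0) : SpecialLinearGroup (Fin 2) K :=
  ⟨!![s, 0; 0, s⁻¹], by rw [Matrix.det_fin_two_of]; field_simp; ring⟩

/-- `diag(s⁻¹, s) ∈ SL₂(K)` for `s ≠ 0`. -/
def diagSL' {K : Type*} [Field K] (s : K) (hs : s ≠ 0) : SpecialLinearGroup (Fin 2) K :=
  ⟨!![s⁻¹, 0; 0, s], by rw [Matrix.det_fin_two_of]; field_simp; ring⟩

/-- `[[s⁻¹, Δ],[0, s]] ∈ SL₂(K)` where `Δ = s - s⁻¹`. -/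
def upSL' {K : Type*} [Field K] (s : K) (hs : s ≠ 0) : SpecialLinearGroup (Fin 2) K :=
  ⟨!![s⁻¹, s - s⁻¹; 0, s], by rw [Matrix.det_fin_two_of]; field_simp; ring⟩

/-- `[[s⁻¹, 0],[Δ, s]] ∈ SL₂(K)` where `Δ = s - s⁻¹`. -/
def lowSL' {K : Type*} [Field K] (s : K) (hs : s ≠ 0) : SpecialLinearGroup (Fin 2) K :=
  ⟨!![s⁻¹, 0; s - s⁻¹, s], by rw [Matrix.det_fin_two_of]; field_simp; ring⟩

/-- The `SL₂(K)`-orbit of the pair `(P, Q)` under simultaneous conjugation. -/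
def pairOrbit {K : Type*} [Field K] (P Q : SpecialLinearGroup (Fin 2) K) :
    Set (SpecialLinearGroup (Fin 2) K × SpecialLinearGroup (Fin 2) K) :=
  {pq | ∃ A : SpecialLinearGroup (Fin 2) K, pq = (A * P * A⁻¹, A * Q * A⁻¹)}

/-!
Conjugating a pair `(X, Y)` of the fiber so that `Y = t'`, it suffices to classify the `Z`
with `(Z, t')` in the fiber up to conjugation by the centraliser of `t'`, which is the diagonal
torus because `r ≠ r⁻¹`. The conditions `tr Z = s + s⁻¹` and `tr (Z t') = s⁻¹ r + s r⁻¹` pin the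
diagonal of `Z` to `(s⁻¹, s)`, and then `det Z = 1` forces one off-diagonal entry to vanish.
Conjugation by `diag(l, l⁻¹)` multiplies the entries `Z 0 1` and `Z 1 0` by `l²` and `l⁻²`, so over
an algebraically closed field a nonzero one can be normalised to `Δ`; for the same reason the
torus cannot change which entries vanish, which separates the three orbits.
-/

open scoped MatrixGroups

namespace Matrix.SpecialLinearGroup

theorem trace_coe_conj {n R : Type*} [Fintype n] [DecidableEq n] [CommRing R]
    (A M : SpecialLinearGroup n R) :
    trace (↑(A * M * A⁻¹) : Matrix n n R) = trace (M : Matrix n n R) := by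
  rw [coe_mul, trace_mul_comm, coe_mul, ← mul_assoc, ← coe_mul, inv_mul_cancel, coe_one,
    one_mul]

end Matrix.SpecialLinearGroup

section SL2

variable {K : Type*} [Field K]

def tracePairFiber (P Q : SL(2, K)) (τ : K) : Set (SL(2, K) × SL(2, K)) :=
  {pq | (∃ A : SL(2, K), pq.1 = A * P * A⁻¹) ∧ (∃ A : SL(2, K), pq.2 = A * Q * A⁻¹) ∧
    trace ((pq.1 : Matrix (Fin 2) (Fin 2) K) * (pq.2 : Matrix (Fin 2) (Fin 2) K)) = τ}

theorem mk_mem_tracePairFiber_iff {P Q X Y : SL(2, K)} {τ : K} :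
    (X, Y) ∈ tracePairFiber P Q τ ↔ (∃ A : SL(2, K), X = A * P * A⁻¹) ∧
      (∃ A : SL(2, K), Y = A * Q * A⁻¹) ∧
        trace ((X : Matrix (Fin 2) (Fin 2) K) * (Y : Matrix (Fin 2) (Fin 2) K)) = τ :=
  Iff.rfl

theorem mem_pairOrbit_self (P Q : SL(2, K)) : (P, Q) ∈ pairOrbit P Q :=
  ⟨1, by simp⟩

theorem pairOrbit_subset_of_mem {P Q X Y : SL(2, K)} (h : (X, Y) ∈ pairOrbit P Q) :
    pairOrbit X Y ⊆ pairOrbit P Q := by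
  obtain ⟨A, hA⟩ := h
  obtain ⟨rfl, rfl⟩ := Prod.mk.inj hA
  rintro _ ⟨B, rfl⟩
  exact ⟨B * A, Prod.ext (by group) (by group)⟩

theorem pairOrbit_subset_tracePairFiber_of_mem {P Q X Y : SL(2, K)} {τ : K}
    (h : (X, Y) ∈ tracePairFiber P Q τ) : pairOrbit X Y ⊆ tracePairFiber P Q τ := by
  obtain ⟨⟨C, hC⟩, ⟨D, hD⟩, htr⟩ := mk_mem_tracePairFiber_iff.mp h
  rintro _ ⟨A, rfl⟩
  rw [mk_mem_tracePairFiber_iff]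
  refine ⟨⟨A * C, by rw [hC]; group⟩, ⟨A * D, by rw [hD]; group⟩, ?_⟩
  have hconj : A * X * A⁻¹ * (A * Y * A⁻¹) = A * (X * Y) * A⁻¹ := by group
  rw [← Matrix.SpecialLinearGroup.coe_mul, hconj, Matrix.SpecialLinearGroup.trace_coe_conj,
    Matrix.SpecialLinearGroup.coe_mul, htr]

theorem exists_mem_pairOrbit_of_mem_tracePairFiber {P Q : SL(2, K)} {τ : K}
    {pq : SL(2, K) × SL(2, K)} (h : pq ∈ tracePairFiber P Q τ) :
    ∃ Z, (Z, Q) ∈ tracePairFiber P Q τ ∧ pq ∈ pairOrbit Z Q := by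
  obtain ⟨B, hB⟩ := h.2.1
  refine ⟨B⁻¹ * pq.1 * B, pairOrbit_subset_tracePairFiber_of_mem (X := pq.1) (Y := pq.2) h ?_,
    B, Prod.ext (by group) hB⟩
  exact ⟨B⁻¹, Prod.ext (by group) (by rw [hB]; group)⟩

theorem sub_inv_ne_zero_of_sq_ne_one {s : K} (hs : s ≠ 0) (hs2 : s ^ 2 ≠ 1) :
    s - s⁻¹ ≠ 0 := by
  rw [sub_ne_zero]
  intro h
  apply hs2
  rw [sq]
  nth_rewrite 2 [h]
  exact mul_inv_cancel₀ hs

theorem coe_diagSL {s : K} (hs : s ≠ 0) :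
    (diagSL s hs : Matrix (Fin 2) (Fin 2) K) = !![s, 0; 0, s⁻¹] :=
  rfl

theorem commute_diagSL {l r : K} (hl : l ≠ 0) (hr : r ≠ 0) :
    Commute (diagSL l hl) (diagSL r hr) := by
  ext i j
  simp only [Matrix.SpecialLinearGroup.coe_mul, coe_diagSL]
  fin_cases i <;> fin_cases j <;> simp [mul_comm]

theorem coe_diagSL_conj {l : K} (hl : l ≠ 0) (M : SL(2, K)) :
    (↑(diagSL l hl * M * (diagSL l hl)⁻¹) : Matrix (Fin 2) (Fin 2) K) =
      !![M 0 0, l ^ 2 * M 0 1; M 1 0 / l ^ 2, M 1 1] := by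
  simp only [Matrix.SpecialLinearGroup.coe_mul, Matrix.SpecialLinearGroup.coe_inv, coe_diagSL]
  rw [eta_fin_two (M : Matrix (Fin 2) (Fin 2) K)]
  ext i j
  fin_cases i <;> fin_cases j <;> simp [adjugate_fin_two] <;> field_simp

theorem coe_eq_diagonal_of_commute_diagSL {r : K} (hr : r ≠ 0) (hr2 : r ^ 2 ≠ 1) {E : SL(2, K)}
    (h : Commute E (diagSL r hr)) :
    (E : Matrix (Fin 2) (Fin 2) K) = diagonal (fun i => E i i) := by
  have hm := congrArg (fun M : SL(2, K) => (M : Matrix (Fin 2) (Fin 2) K)) h.eq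
  simp only [Matrix.SpecialLinearGroup.coe_mul, coe_diagSL] at hm
  have h01 := congrFun (congrFun hm 0) 1
  have h10 := congrFun (congrFun hm 1) 0
  simp only [Fin.isValue, mul_apply, of_apply, cons_val', cons_val_one, cons_val_fin_one,
    Fin.sum_univ_two, cons_val_zero, mul_zero, zero_add, zero_mul, add_zero] at h01 h10
  have hΔ := sub_inv_ne_zero_of_sq_ne_one hr hr2
  have hE01 : E 0 1 = 0 :=
    (mul_eq_zero.mp (by linear_combination -h01 : E 0 1 * (r - r⁻¹) = 0)).resolve_right hΔ
  have hE10 : E 1 0 = 0 :=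
    (mul_eq_zero.mp (by linear_combination h10 : E 1 0 * (r - r⁻¹) = 0)).resolve_right hΔ
  ext i j
  fin_cases i <;> fin_cases j <;> simp [hE01, hE10]

theorem mk_mem_pairOrbit_diagSL_of_eq_conj {l r : K} (hl : l ≠ 0) (hr : r ≠ 0) {P Z : SL(2, K)}
    (hZ : Z = diagSL l hl * P * (diagSL l hl)⁻¹) :
    (Z, diagSL r hr) ∈ pairOrbit P (diagSL r hr) :=
  ⟨diagSL l hl, Prod.ext hZ (by rw [(commute_diagSL hl hr).eq, mul_inv_cancel_right])⟩

theorem apply_eq_zero_of_mul_eq_mul_of_commute_diagSL {r : K} (hr : r ≠ 0) (hr2 : r ^ 2 ≠ 1)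
    {E P Q : SL(2, K)} (hE : Commute E (diagSL r hr)) (hEPQ : E * P = Q * E) {i j : Fin 2}
    (hP : P i j = 0) : Q i j = 0 := by
  have hdiag := coe_eq_diagonal_of_commute_diagSL hr hr2 hE
  have hprod : ∏ k, E k k ≠ 0 := by
    rw [← det_diagonal, ← hdiag, Matrix.SpecialLinearGroup.det_coe]
    exact one_ne_zero
  have hij := congrFun (congrFun (congrArg (fun M : SL(2, K) => (M : Matrix (Fin 2) (Fin 2) K))
    hEPQ) i) j
  simp only [Matrix.SpecialLinearGroup.coe_mul] at hij
  rw [hdiag, diagonal_mul, mul_diagonal, hP, mul_zero] at hij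
  exact (mul_eq_zero.mp hij.symm).resolve_right
    (Finset.prod_ne_zero_iff.mp hprod j (Finset.mem_univ j))

theorem disjoint_pairOrbit_diagSL_of_apply_eq_zero {r : K} (hr : r ≠ 0) (hr2 : r ^ 2 ≠ 1)
    {P Q : SL(2, K)} {i j : Fin 2} (hP : P i j = 0) (hQ : Q i j ≠ 0) :
    Disjoint (pairOrbit P (diagSL r hr)) (pairOrbit Q (diagSL r hr)) := by
  rw [Set.disjoint_left]
  rintro _ ⟨A, rfl⟩ ⟨B, hB⟩
  obtain ⟨hPQ, hrr⟩ := Prod.mk.inj hB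
  have intertwine {X Y : SL(2, K)} (h : A * X * A⁻¹ = B * Y * B⁻¹) :
      B⁻¹ * A * X = Y * (B⁻¹ * A) :=
    calc B⁻¹ * A * X = B⁻¹ * (A * X * A⁻¹) * A := by group
      _ = Y * (B⁻¹ * A) := by rw [h]; group
  exact hQ (apply_eq_zero_of_mul_eq_mul_of_commute_diagSL hr hr2 (intertwine hrr)
    (intertwine hPQ) hP)

theorem trace_mul_diagSL (M : Matrix (Fin 2) (Fin 2) K) {r : K} (hr : r ≠ 0) :
    trace (M * (diagSL r hr : Matrix (Fin 2) (Fin 2) K)) = M 0 0 * r + M 1 1 * r⁻¹ := by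
  simp [coe_diagSL, trace_fin_two, mul_apply, Fin.sum_univ_two]

theorem apply_zero_one_mul_apply_one_zero_eq_zero {s : K} (hs : s ≠ 0) {Z : SL(2, K)}
    (h00 : Z 0 0 = s⁻¹) (h11 : Z 1 1 = s) : Z 0 1 * Z 1 0 = 0 := by
  have hdet := Z.det_coe
  rw [det_fin_two, h00, h11, inv_mul_cancel₀ hs] at hdet
  linear_combination -hdet

theorem exists_eq_conj_diagSL {s : K} (hs : s ≠ 0) (hs2 : s ^ 2 ≠ 1) {Z : SL(2, K)}
    (h00 : Z 0 0 = s⁻¹) (h11 : Z 1 1 = s) : ∃ C : SL(2, K), Z = C * diagSL s hs * C⁻¹ := by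
  have hΔ := sub_inv_ne_zero_of_sq_ne_one hs hs2
  have hbc := apply_zero_one_mul_apply_one_zero_eq_zero hs h00 h11
  have hbc' : Z 0 1 * (Z 1 0 / (s - s⁻¹)) = 0 := by rw [mul_div_assoc', hbc, zero_div]
  have hcb' : Z 1 0 * (Z 0 1 / (s - s⁻¹)) = 0 := by rw [mul_div_assoc', mul_comm, hbc, zero_div]
  -- the columns of `C` are eigenvectors of `Z` for `s` and `s⁻¹`
  let C : SL(2, K) := ⟨!![Z 0 1 / (s - s⁻¹), -1; 1, Z 1 0 / (s - s⁻¹)], by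
    rw [det_fin_two_of, div_mul_div_comm, hbc]; ring⟩
  refine ⟨C, eq_mul_inv_iff_mul_eq.mpr ?_⟩
  ext i j
  simp only [Matrix.SpecialLinearGroup.coe_mul, coe_diagSL]
  rw [eta_fin_two (Z : Matrix (Fin 2) (Fin 2) K)]
  fin_cases i <;> fin_cases j <;> simp [C, h00, h11, hbc', hcb'] <;> field_simp <;> ring

theorem mk_mem_tracePairFiber_diagSL_iff {s r : K} (hs : s ≠ 0) (hr : r ≠ 0) (hs2 : s ^ 2 ≠ 1)
    (hr2 : r ^ 2 ≠ 1) (Z : SL(2, K)) :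
    (Z, diagSL r hr) ∈ tracePairFiber (diagSL s hs) (diagSL r hr) (s⁻¹ * r + s * r⁻¹) ↔
      Z 0 0 = s⁻¹ ∧ Z 1 1 = s := by
  rw [mk_mem_tracePairFiber_iff, trace_mul_diagSL _ hr]
  constructor
  · rintro ⟨⟨C, hC⟩, -, htr⟩
    have htrace : Z 0 0 + Z 1 1 = s + s⁻¹ := by
      rw [← trace_fin_two, hC, Matrix.SpecialLinearGroup.trace_coe_conj, coe_diagSL,
        trace_fin_two_of]
    have h00 : Z 0 0 = s⁻¹ := by
      have hΔ := sub_inv_ne_zero_of_sq_ne_one hr hr2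
      refine mul_right_cancel₀ hΔ ?_
      linear_combination htr - r⁻¹ * htrace
    exact ⟨h00, by linear_combination htrace - h00⟩
  · rintro ⟨h00, h11⟩
    exact ⟨exists_eq_conj_diagSL hs hs2 h00 h11, ⟨1, by group⟩, by rw [h00, h11]⟩

variable [IsAlgClosed K]

theorem mk_mem_pairOrbit_upSL' {s r : K} (hs : s ≠ 0) (hr : r ≠ 0) (hs2 : s ^ 2 ≠ 1)
    {Z : SL(2, K)} (h00 : Z 0 0 = s⁻¹) (h11 : Z 1 1 = s) (h10 : Z 1 0 = 0) (h01 : Z 0 1 ≠ 0) :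
    (Z, diagSL r hr) ∈ pairOrbit (upSL' s hs) (diagSL r hr) := by
  have hΔ := sub_inv_ne_zero_of_sq_ne_one hs hs2
  obtain ⟨l, hl⟩ := IsAlgClosed.exists_pow_nat_eq (Z 0 1 / (s - s⁻¹)) two_pos
  have hl0 : l ≠ 0 := by
    rintro rfl
    exact div_ne_zero h01 hΔ (by rw [← hl]; ring)
  refine mk_mem_pairOrbit_diagSL_of_eq_conj hl0 hr (Matrix.SpecialLinearGroup.ext _ _ ?_)
  intro i j
  rw [coe_diagSL_conj hl0]
  fin_cases i <;> fin_cases j <;> simp [upSL', h00, h11, h10, hl, hΔ]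

theorem mk_mem_pairOrbit_lowSL' {s r : K} (hs : s ≠ 0) (hr : r ≠ 0) (hs2 : s ^ 2 ≠ 1)
    {Z : SL(2, K)} (h00 : Z 0 0 = s⁻¹) (h11 : Z 1 1 = s) (h01 : Z 0 1 = 0) (h10 : Z 1 0 ≠ 0) :
    (Z, diagSL r hr) ∈ pairOrbit (lowSL' s hs) (diagSL r hr) := by
  have hΔ := sub_inv_ne_zero_of_sq_ne_one hs hs2
  obtain ⟨l, hl⟩ := IsAlgClosed.exists_pow_nat_eq ((s - s⁻¹) / Z 1 0) two_pos
  have hl0 : l ≠ 0 := by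
    rintro rfl
    exact div_ne_zero hΔ h10 (by rw [← hl]; ring)
  refine mk_mem_pairOrbit_diagSL_of_eq_conj hl0 hr (Matrix.SpecialLinearGroup.ext _ _ ?_)
  intro i j
  rw [coe_diagSL_conj hl0]
  fin_cases i <;> fin_cases j <;> simp [lowSL', h00, h11, h01, hl, hΔ]

theorem mk_mem_pairOrbit_union {s r : K} (hs : s ≠ 0) (hr : r ≠ 0) (hs2 : s ^ 2 ≠ 1)
    {Z : SL(2, K)} (h00 : Z 0 0 = s⁻¹) (h11 : Z 1 1 = s) :
    (Z, diagSL r hr) ∈ pairOrbit (upSL' s hs) (diagSL r hr) ∪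
      pairOrbit (lowSL' s hs) (diagSL r hr) ∪ pairOrbit (diagSL' s hs) (diagSL r hr) := by
  have hbc := apply_zero_one_mul_apply_one_zero_eq_zero hs h00 h11
  by_cases h01 : Z 0 1 = 0
  · by_cases h10 : Z 1 0 = 0
    · have hZ : Z = diagSL' s hs := by
        ext i j
        fin_cases i <;> fin_cases j <;> simp [diagSL', h00, h11, h01, h10]
      exact Or.inr (hZ ▸ mem_pairOrbit_self _ _)
    · exact Or.inl (Or.inr (mk_mem_pairOrbit_lowSL' hs hr hs2 h00 h11 h01 h10))
  · have h10 : Z 1 0 = 0 := (mul_eq_zero.mp hbc).resolve_left h01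
    exact Or.inl (Or.inl (mk_mem_pairOrbit_upSL' hs hr hs2 h00 h11 h10 h01))

end SL2

/-- The fiber `tr(XY) = s⁻¹r + sr⁻¹` is the union of the three pairwise disjoint orbits
of `([[s⁻¹,Δ],[0,s]], t')`, `([[s⁻¹,0],[Δ,s]], t')`, `(diag(s⁻¹,s), t')`. -/
theorem fiber_lneg1_decomposition {K : Type*} [Field K] [IsAlgClosed K]
    (s r : K) (hs : s ≠ 0) (hr : r ≠ 0) (hs2 : s ^ 2 ≠ 1) (hr2 : r ^ 2 ≠ 1) :
    ({pq : SpecialLinearGroup (Fin 2) K × SpecialLinearGroup (Fin 2) K |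
        (∃ A : SpecialLinearGroup (Fin 2) K, pq.1 = A * diagSL s hs * A⁻¹) ∧
        (∃ A : SpecialLinearGroup (Fin 2) K, pq.2 = A * diagSL r hr * A⁻¹) ∧
        Matrix.trace ((pq.1 : Matrix (Fin 2) (Fin 2) K) * (pq.2 : Matrix (Fin 2) (Fin 2) K)) =
          s⁻¹ * r + s * r⁻¹} =
      pairOrbit (upSL' s hs) (diagSL r hr) ∪ pairOrbit (lowSL' s hs) (diagSL r hr) ∪
        pairOrbit (diagSL' s hs) (diagSL r hr)) ∧
    Disjoint (pairOrbit (upSL' s hs) (diagSL r hr)) (pairOrbit (lowSL' s hs) (diagSL r hr)) ∧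
    Disjoint (pairOrbit (upSL' s hs) (diagSL r hr)) (pairOrbit (diagSL' s hs) (diagSL r hr)) ∧
    Disjoint (pairOrbit (lowSL' s hs) (diagSL r hr)) (pairOrbit (diagSL' s hs) (diagSL r hr)) := by
  have hΔ := sub_inv_ne_zero_of_sq_ne_one hs hs2
  have hfiber := mk_mem_tracePairFiber_diagSL_iff hs hr hs2 hr2
  refine ⟨Set.Subset.antisymm ?_ ?_, ?_, ?_, ?_⟩
  · intro pq hpq
    obtain ⟨Z, hZ, hpqZ⟩ := exists_mem_pairOrbit_of_mem_tracePairFiber hpq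
    obtain ⟨h00, h11⟩ := (hfiber Z).mp hZ
    rcases mk_mem_pairOrbit_union hs hr hs2 h00 h11 with (h | h) | h
    · exact Or.inl (Or.inl (pairOrbit_subset_of_mem h hpqZ))
    · exact Or.inl (Or.inr (pairOrbit_subset_of_mem h hpqZ))
    · exact Or.inr (pairOrbit_subset_of_mem h hpqZ)
  · refine Set.union_subset (Set.union_subset ?_ ?_) ?_ <;>
      exact pairOrbit_subset_tracePairFiber_of_mem ((hfiber _).mpr ⟨rfl, rfl⟩)
  · exact (disjoint_pairOrbit_diagSL_of_apply_eq_zero hr hr2 (i := 0) (j := 1) rfl hΔ).symm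
  · exact (disjoint_pairOrbit_diagSL_of_apply_eq_zero hr hr2 (i := 0) (j := 1) rfl hΔ).symm
  · exact (disjoint_pairOrbit_diagSL_of_apply_eq_zero hr hr2 (i := 1) (j := 0) rfl hΔ).symm
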